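/- arXiv:math/0210263 — 4 statements merged into one kernel-verified Lean document; each statement's English description precedes it below -/
import Mathlib

section
/- The image f(ℂ) of the map f : ℂ → ℂˣ × ℂˣ, f(t) = (exp(t), exp(i·t)), is a closed subset of ℂˣ × ℂˣ (with the topology induced from ℂ × ℂ). -/
/-! `f` has the continuous left inverse `(a, b) ↦ log ‖a‖ - i log ‖b‖`, because
`‖exp t‖ = exp (re t)` and `‖exp (i t)‖ = exp (-im t)`; the range of a continuous map with a
continuous left inverse into a Hausdorff space is closed. -/

open Complex

/-- The map `f : ℂ → ℂˣ × ℂˣ` given by `f t = (exp t, exp (I * t))`. -/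
noncomputable def f (t : ℂ) : ℂˣ × ℂˣ :=
  (Units.mk0 (Complex.exp t) (Complex.exp_ne_zero t),
   Units.mk0 (Complex.exp (Complex.I * t)) (Complex.exp_ne_zero (Complex.I * t)))

noncomputable def fLeftInv (p : ℂˣ × ℂˣ) : ℂ :=
  Real.log ‖(p.1 : ℂ)‖ - I * Real.log ‖(p.2 : ℂ)‖

theorem continuous_f : Continuous f := by
  refine .prodMk ?_ ?_ <;> exact Units.isEmbedding_val₀.continuous_iff.mpr (by fun_prop)

theorem continuous_fLeftInv : Continuous fLeftInv := by
  have hlog (u : ℂˣ × ℂˣ → ℂˣ) (hu : Continuous u) :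
      Continuous fun p => ((Real.log ‖(u p : ℂ)‖ : ℝ) : ℂ) :=
    continuous_ofReal.comp <| (Units.continuous_val.comp hu).norm.log fun p => by simp
  exact (hlog _ continuous_fst).sub (continuous_const.mul (hlog _ continuous_snd))

theorem Complex.log_norm_exp (z : ℂ) : Real.log ‖exp z‖ = z.re := by
  rw [norm_exp, Real.log_exp]

theorem fLeftInv_leftInverse : Function.LeftInverse fLeftInv f := fun t => by
  simp only [fLeftInv, f, Units.val_mk0, log_norm_exp, mul_re, I_re, I_im]
  apply Complex.ext <;> simp

/-- The image `f(ℂ)` is a closed subset of `ℂˣ × ℂˣ`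
(whose topology is the one induced from `ℂ × ℂ`). -/
theorem stmt1 : IsClosed (Set.range f) :=
  fLeftInv_leftInverse.isClosed_range continuous_fLeftInv continuous_f
end

section
/- Let π : ℂ × ℂ → ℂˣ × ℂˣ be given by π(z₁, z₂) = (exp(z₁), exp(z₂)), and let f : ℂ → ℂˣ × ℂˣ be given by f(t) = (exp(t), exp(i·t)). Then the preimage π⁻¹(f(ℂ)) equals the set {(z₁, z₂) ∈ ℂ × ℂ : (z₂ − i·z₁)/(2πi) ∈ ℤ[i]}, where ℤ[i] = {a + b·i : a, b ∈ ℤ} is the set of Gaussian integers in ℂ. -/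
/-- The universal covering map `π : ℂ × ℂ → ℂˣ × ℂˣ`, `π (z₁, z₂) = (exp z₁, exp z₂)`. -/
noncomputable def p (z : ℂ × ℂ) : ℂˣ × ℂˣ :=
  (Units.mk0 (Complex.exp z.1) (Complex.exp_ne_zero z.1),
   Units.mk0 (Complex.exp z.2) (Complex.exp_ne_zero z.2))

open Complex
open scoped Real

theorem f_eq_p_iff (t : ℂ) (z : ℂ × ℂ) :
    f t = p z ↔ exp t = exp z.1 ∧ exp (I * t) = exp z.2 := by
  simp only [f, p, Prod.ext_iff, Units.ext_iff, Units.val_mk0]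

theorem exists_exp_eq_and_exp_I_mul_eq_iff (w₁ w₂ : ℂ) :
    (∃ t, exp t = exp w₁ ∧ exp (I * t) = exp w₂) ↔
      ∃ a b : ℤ, (w₂ - I * w₁) / (2 * π * I) = a + b * I := by
  simp only [div_eq_iff two_pi_I_ne_zero, exp_eq_exp_iff_exists_int]
  constructor
  · rintro ⟨t, ⟨n, hn⟩, ⟨m, hm⟩⟩
    refine ⟨-m, n, ?_⟩
    push_cast
    linear_combination I * hn - hm
  · rintro ⟨a, b, hab⟩
    refine ⟨w₁ + b * (2 * π * I), ⟨b, rfl⟩, ⟨-a, ?_⟩⟩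
    push_cast
    linear_combination -hab

/-- `π⁻¹(f(ℂ)) = {(z₁, z₂) : (z₂ - I·z₁)/(2πI) ∈ ℤ[i]}`. -/
theorem stmt2 :
    p ⁻¹' (Set.range f) =
      {z : ℂ × ℂ | ∃ a b : ℤ,
        (z.2 - Complex.I * z.1) / (2 * (Real.pi : ℂ) * Complex.I) = (a : ℂ) + (b : ℂ) * Complex.I} := by
  ext z
  simp only [Set.mem_preimage, Set.mem_range, Set.mem_ofPred_eq, f_eq_p_iff]
  exact exists_exp_eq_and_exp_I_mul_eq_iff z.1 z.2
end

section
/- Let f : ℂ → ℂˣ × ℂˣ be the group homomorphism f(t) = (exp(t), exp(i·t)) and let Λ ⊆ ℂ be the additive subgroup ℤ[i] = {a + b·i : a, b ∈ ℤ}. Then the quotient group (ℂˣ × ℂˣ)/f(ℂ) is isomorphic, as a topological group, to the quotient ℂ/Λ; that is, there is a group isomorphism (ℂˣ × ℂˣ)/f(ℂ) ≅ ℂ/ℤ[i] which is also a homeomorphism for the quotient topologies. -/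
/-- The group homomorphism `f : (ℂ, +) → ℂˣ × ℂˣ`, `f t = (exp t, exp (I·t))`. -/
noncomputable def fHom : Multiplicative ℂ →* ℂˣ × ℂˣ where
  toFun t :=
    (Units.mk0 (Complex.exp (Multiplicative.toAdd t)) (Complex.exp_ne_zero _),
     Units.mk0 (Complex.exp (Complex.I * Multiplicative.toAdd t)) (Complex.exp_ne_zero _))
  map_one' := by
    refine Prod.ext (Units.ext ?_) (Units.ext ?_) <;> simp
  map_mul' x y := by
    refine Prod.ext (Units.ext ?_) (Units.ext ?_) <;>
      simp [Complex.exp_add, mul_add]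

/-- The Gaussian integers `ℤ[i] = {a + b·i : a, b ∈ ℤ}` as an additive subgroup of `ℂ`. -/
noncomputable def gaussianInts : AddSubgroup ℂ where
  carrier := {z : ℂ | ∃ a b : ℤ, z = (a : ℂ) + (b : ℂ) * Complex.I}
  zero_mem' := ⟨0, 0, by simp⟩
  add_mem' := by
    rintro x y ⟨a, b, rfl⟩ ⟨c, d, rfl⟩
    exact ⟨a + c, b + d, by push_cast; ring⟩
  neg_mem' := by
    rintro x ⟨a, b, rfl⟩
    exact ⟨-a, -b, by push_cast; ring⟩

open Complex Topology

lemma piC_ne_zero : (Real.pi : ℂ) ≠ 0 := Complex.ofReal_ne_zero.mpr Real.pi_ne_zero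

/-- Key auxiliary map `ℂˣ × ℂˣ →* Multiplicative (ℂ ⧸ ℤ[i])`,
`(u, v) ↦ (log v - I·log u) / (2π)`. -/
noncomputable def psiHom : ℂˣ × ℂˣ →* Multiplicative (ℂ ⧸ gaussianInts) where
  toFun p := Multiplicative.ofAdd
    (QuotientAddGroup.mk (((p.2 : ℂ).log - Complex.I * (p.1 : ℂ).log) / (2 * Real.pi)))
  map_one' := by
    simp [Complex.log_one]
  map_mul' p q := by
    obtain ⟨m, hm⟩ : ∃ m : ℤ, Complex.log ((p.1 : ℂ) * q.1) =
        Complex.log (p.1 : ℂ) + Complex.log (q.1 : ℂ) + m * (2 * Real.pi * Complex.I) := by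
      rw [← Complex.exp_eq_exp_iff_exists_int, Complex.exp_add,
        Complex.exp_log (mul_ne_zero p.1.ne_zero q.1.ne_zero),
        Complex.exp_log p.1.ne_zero, Complex.exp_log q.1.ne_zero]
    obtain ⟨n, hn⟩ : ∃ n : ℤ, Complex.log ((p.2 : ℂ) * q.2) =
        Complex.log (p.2 : ℂ) + Complex.log (q.2 : ℂ) + n * (2 * Real.pi * Complex.I) := by
      rw [← Complex.exp_eq_exp_iff_exists_int, Complex.exp_add,
        Complex.exp_log (mul_ne_zero p.2.ne_zero q.2.ne_zero),
        Complex.exp_log p.2.ne_zero, Complex.exp_log q.2.ne_zero]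
    rw [← ofAdd_add, ← QuotientAddGroup.mk_add]
    refine congrArg Multiplicative.ofAdd ?_
    rw [QuotientAddGroup.eq_iff_sub_mem]
    refine ⟨m, n, ?_⟩
    simp only [Prod.fst_mul, Prod.snd_mul, Units.val_mul] at *
    rw [hm, hn]
    have hpi := piC_ne_zero
    field_simp
    linear_combination (-(2*(Real.pi:ℂ)*m)) * Complex.I_sq

lemma psi_apply (p : ℂˣ × ℂˣ) : psiHom p = Multiplicative.ofAdd
    (QuotientAddGroup.mk (((p.2 : ℂ).log - Complex.I * (p.1 : ℂ).log) / (2 * Real.pi))) := rfl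

lemma log_exp' (w : ℂ) : ∃ n : ℤ, Complex.log (Complex.exp w) = w + n * (2 * Real.pi * I) := by
  rw [← Complex.exp_eq_exp_iff_exists_int, Complex.exp_log (Complex.exp_ne_zero w)]

lemma mk_log_exp (z w : ℂ) :
    (QuotientAddGroup.mk ((Complex.log (Complex.exp w) - Complex.I * Complex.log (Complex.exp z))
        / (2 * Real.pi)) : ℂ ⧸ gaussianInts) =
      QuotientAddGroup.mk ((w - Complex.I * z) / (2 * Real.pi)) := by
  obtain ⟨m, hm⟩ := log_exp' z
  obtain ⟨n, hn⟩ := log_exp' w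
  rw [QuotientAddGroup.eq_iff_sub_mem]
  refine ⟨m, n, ?_⟩
  rw [hm, hn]
  have hpi := piC_ne_zero
  field_simp
  linear_combination (-(2*(Real.pi:ℂ)*m)) * Complex.I_sq

lemma psi_comp_exp (z w : ℂ) :
    psiHom (Units.mk0 (Complex.exp z) (Complex.exp_ne_zero z),
            Units.mk0 (Complex.exp w) (Complex.exp_ne_zero w)) =
      Multiplicative.ofAdd (QuotientAddGroup.mk ((w - Complex.I * z) / (2 * Real.pi))) := by
  rw [psi_apply]
  exact congrArg Multiplicative.ofAdd (mk_log_exp z w)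

noncomputable def unitsExp : ℂ → ℂˣ := fun z => Units.mk0 (Complex.exp z) (Complex.exp_ne_zero z)

lemma continuous_unitsExp : Continuous unitsExp := by
  rw [Units.isOpenEmbedding_val.toIsEmbedding.continuous_iff]
  exact Complex.continuous_exp

lemma isOpenMap_unitsExp : IsOpenMap unitsExp := by
  intro U hU
  rw [Units.isOpenEmbedding_val.isOpen_iff_image_isOpen]
  have : (Units.val : ℂˣ → ℂ) '' (unitsExp '' U) = Complex.exp '' U := by
    rw [← Set.image_comp]; rfl
  rw [this]
  exact Complex.isOpenMap_exp U hU

lemma surjective_unitsExp : Function.Surjective unitsExp := by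
  intro u
  exact ⟨Complex.log u, Units.ext (by simp [unitsExp, Complex.exp_log u.ne_zero])⟩

lemma unitsExp_eq (z : ℂ) :
    unitsExp z = Units.mk0 (Complex.exp z) (Complex.exp_ne_zero z) := rfl

lemma psi_surjective : Function.Surjective psiHom := by
  intro q
  obtain ⟨z, hz⟩ := QuotientAddGroup.mk_surjective (Multiplicative.toAdd q)
  refine ⟨(1, unitsExp (2 * Real.pi * z)), ?_⟩
  have h1 : (1 : ℂˣ) = Units.mk0 (Complex.exp 0) (Complex.exp_ne_zero 0) := Units.ext (by simp)
  rw [show ((1 : ℂˣ), unitsExp (2 * Real.pi * z)) =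
      (Units.mk0 (Complex.exp 0) (Complex.exp_ne_zero 0),
       Units.mk0 (Complex.exp (2 * Real.pi * z)) (Complex.exp_ne_zero _)) from
    Prod.ext h1 (unitsExp_eq _), psi_comp_exp]
  have hx : ((2 * Real.pi * z : ℂ) - Complex.I * 0) / (2 * Real.pi) = z := by
    have hpi := piC_ne_zero
    field_simp
    simp
  rw [hx, hz]
  exact ofAdd_toAdd q

lemma two_piC_ne_zero : (2 * Real.pi : ℂ) ≠ 0 := by
  simpa using piC_ne_zero

lemma psi_ker : psiHom.ker = fHom.range := by
  ext p
  obtain ⟨u, v⟩ := p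
  rw [MonoidHom.mem_ker]
  constructor
  · intro hp
    have h0 : (QuotientAddGroup.mk (((v : ℂ).log - Complex.I * (u : ℂ).log) / (2 * Real.pi)) :
        ℂ ⧸ gaussianInts) = 0 := by
      have := congrArg Multiplicative.toAdd hp
      simpa [psi_apply] using this
    rw [QuotientAddGroup.eq_zero_iff] at h0
    obtain ⟨a, b, hab⟩ := h0
    rw [div_eq_iff two_piC_ne_zero] at hab
    refine ⟨Multiplicative.ofAdd ((u : ℂ).log - 2 * Real.pi * a * Complex.I), ?_⟩
    refine Prod.ext (Units.ext ?_) (Units.ext ?_)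
    · show Complex.exp ((u : ℂ).log - 2 * Real.pi * a * Complex.I) = (u : ℂ)
      have h2 : ((u : ℂ).log - 2 * Real.pi * a * Complex.I) =
          (u : ℂ).log + (-a : ℤ) * (2 * Real.pi * Complex.I) := by push_cast; ring
      rw [h2, Complex.exp_add, Complex.exp_int_mul_two_pi_mul_I,
        Complex.exp_log u.ne_zero, mul_one]
    · show Complex.exp (Complex.I * ((u : ℂ).log - 2 * Real.pi * a * Complex.I)) = (v : ℂ)
      have h3 : Complex.I * ((u : ℂ).log - 2 * Real.pi * a * Complex.I) =
          (v : ℂ).log + (-b : ℤ) * (2 * Real.pi * Complex.I) := by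
        push_cast
        linear_combination -hab + (-(2 * (Real.pi : ℂ) * a)) * Complex.I_sq
      rw [h3, Complex.exp_add, Complex.exp_int_mul_two_pi_mul_I,
        Complex.exp_log v.ne_zero, mul_one]
  · rintro ⟨t, ht⟩
    rw [← ht]
    rw [show fHom t =
        (Units.mk0 (Complex.exp (Multiplicative.toAdd t)) (Complex.exp_ne_zero _),
         Units.mk0 (Complex.exp (Complex.I * Multiplicative.toAdd t))
           (Complex.exp_ne_zero _)) from rfl, psi_comp_exp]
    simp

lemma psi_continuous : Continuous psiHom := by
  have hq : IsQuotientMap (Prod.map unitsExp unitsExp) :=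
    (isOpenMap_unitsExp.prodMap isOpenMap_unitsExp).isQuotientMap
      (continuous_unitsExp.prodMap continuous_unitsExp)
      (surjective_unitsExp.prodMap surjective_unitsExp)
  rw [hq.continuous_iff]
  have : (psiHom ∘ Prod.map unitsExp unitsExp) = fun zw : ℂ × ℂ =>
      Multiplicative.ofAdd
        (QuotientAddGroup.mk ((zw.2 - Complex.I * zw.1) / (2 * Real.pi))) := by
    funext zw
    exact psi_comp_exp zw.1 zw.2
  rw [this]
  exact continuous_ofAdd.comp <| continuous_quot_mk.comp <| by fun_prop

/-- The quotient group `(ℂˣ × ℂˣ)/f(ℂ)` is isomorphic, as a topological group,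
to `ℂ/ℤ[i]`. -/
theorem stmt5 :
    ∃ e : (ℂˣ × ℂˣ) ⧸ fHom.range ≃* Multiplicative (ℂ ⧸ gaussianInts),
      Continuous e ∧ Continuous e.symm := by
  classical
  let e : (ℂˣ × ℂˣ) ⧸ fHom.range ≃* Multiplicative (ℂ ⧸ gaussianInts) :=
    (QuotientGroup.quotientMulEquivOfEq psi_ker.symm).trans
      (QuotientGroup.quotientKerEquivOfSurjective psiHom psi_surjective)
  have he : ∀ p : ℂˣ × ℂˣ, e (QuotientGroup.mk p) = psiHom p := by
    intro p
    simp [e, QuotientGroup.quotientMulEquivOfEq_mk]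
    rfl
  refine ⟨e, ?_, ?_⟩
  · rw [(QuotientGroup.isQuotientMap_mk fHom.range).continuous_iff]
    have : (⇑e ∘ QuotientGroup.mk) = ⇑psiHom := funext he
    rw [this]
    exact psi_continuous
  · have key : ∀ z : ℂ, e.symm (Multiplicative.ofAdd (QuotientAddGroup.mk z)) =
        QuotientGroup.mk (1, unitsExp (2 * Real.pi * z)) := by
      intro z
      rw [MulEquiv.symm_apply_eq, he]
      have : (1 : ℂˣ) = Units.mk0 (Complex.exp 0) (Complex.exp_ne_zero 0) :=
        Units.ext (by simp)
      rw [this]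
      rw [show (unitsExp (2 * Real.pi * z)) =
        Units.mk0 (Complex.exp (2 * Real.pi * z)) (Complex.exp_ne_zero _) from rfl]
      rw [psi_comp_exp]
      refine congrArg Multiplicative.ofAdd ?_
      rw [QuotientAddGroup.eq_iff_sub_mem]
      refine ⟨0, 0, ?_⟩
      have hpi := piC_ne_zero
      field_simp
      simp
    have hf : Continuous (fun q : ℂ ⧸ gaussianInts => e.symm (Multiplicative.ofAdd q)) := by
      rw [(QuotientAddGroup.isQuotientMap_mk gaussianInts).continuous_iff]
      have : ((fun q : ℂ ⧸ gaussianInts => e.symm (Multiplicative.ofAdd q)) ∘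
          QuotientAddGroup.mk) = fun z : ℂ =>
            QuotientGroup.mk (1, unitsExp (2 * Real.pi * z)) := by
        funext z; exact key z
      rw [this]
      exact continuous_quot_mk.comp
        (Continuous.prodMk continuous_const
          (continuous_unitsExp.comp (by fun_prop)))
    exact hf.comp continuous_toAdd
end

section
/- Let α, β ∈ ℂ with |α| > 1 and |β| > 1, and let ℤ act on X = ℂ² ∖ {(0,0)} by n · (z₁, z₂) = (αⁿ·z₁, βⁿ·z₂). Then the orbit space X/ℤ, equipped with the quotient topology, is a compact Hausdorff topological space. -/
/-!
With `ρ z = ‖z‖` the sup norm, the generator of the action multiplies `ρ` by a factor between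
`c = min ‖α‖ ‖β‖ > 1` and `C = max ‖α‖ ‖β‖`, so `ρ (n +ᵥ z) ≥ c ^ n * ρ z` for `n ≥ 0`.
Hence `n +ᵥ K` meets `L` (`K`, `L` compact) only when `c ^ |n| ≤ max_L ρ / min_K ρ`: the action
is properly discontinuous, and the quotient of the locally compact Hausdorff space `ℂ² ∖ {0}` is
Hausdorff. For compactness, the least `n` with `ρ (n +ᵥ z) ≥ 1` puts `n +ᵥ z` in the compact
shell `1 ≤ ρ ≤ C`, which therefore maps onto the quotient.
-/

/-- The orbit equivalence relation of the `ℤ`-action `n · (z₁, z₂) = (αⁿ·z₁, βⁿ·z₂)`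
on `X = ℂ² \ {(0,0)}`. -/
def hopfSetoid (α β : ℂ) (hα : 1 < ‖α‖) (hβ : 1 < ‖β‖) :
    Setoid {z : ℂ × ℂ // z ≠ 0} where
  r x y := ∃ n : ℤ,
    α ^ n * (x : ℂ × ℂ).1 = (y : ℂ × ℂ).1 ∧ β ^ n * (x : ℂ × ℂ).2 = (y : ℂ × ℂ).2
  iseqv := by
    have hα0 : α ≠ 0 := by rintro rfl; simp at hα <;> linarith
    have hβ0 : β ≠ 0 := by rintro rfl; simp at hβ <;> linarith
    constructor
    · exact fun x => ⟨0, by simp, by simp⟩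
    · rintro x y ⟨n, h1, h2⟩
      refine ⟨-n, ?_, ?_⟩
      · rw [← h1, ← mul_assoc, ← zpow_add₀ hα0]; simp
      · rw [← h2, ← mul_assoc, ← zpow_add₀ hβ0]; simp
    · rintro x y z ⟨n, h1, h2⟩ ⟨m, h1', h2'⟩
      refine ⟨n + m, ?_, ?_⟩
      · rw [← h1', ← h1, zpow_add₀ hα0]; ring
      · rw [← h2', ← h2, zpow_add₀ hβ0]; ring

open Set

section Expanding

variable {X : Type*} [AddAction ℤ X] {ρ : X → ℝ} {c : ℝ}

theorem pow_mul_le_natCast_vadd (hc : 0 ≤ c) (hρ : ∀ x, c * ρ x ≤ ρ ((1 : ℤ) +ᵥ x))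
    (x : X) (n : ℕ) : c ^ n * ρ x ≤ ρ ((n : ℤ) +ᵥ x) := by
  induction n with
  | zero => simp
  | succ n ih =>
    calc c ^ (n + 1) * ρ x = c * (c ^ n * ρ x) := by ring
      _ ≤ c * ρ ((n : ℤ) +ᵥ x) := mul_le_mul_of_nonneg_left ih hc
      _ ≤ ρ (((n + 1 : ℕ) : ℤ) +ᵥ x) := by
        rw [Nat.cast_succ, add_comm, add_vadd]; exact hρ _

theorem pow_mul_neg_natCast_vadd_le (hc : 0 ≤ c) (hρ : ∀ x, c * ρ x ≤ ρ ((1 : ℤ) +ᵥ x))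
    (x : X) (n : ℕ) : c ^ n * ρ (-(n : ℤ) +ᵥ x) ≤ ρ x := by
  simpa using pow_mul_le_natCast_vadd hc hρ (-(n : ℤ) +ᵥ x) n

theorem pow_natAbs_mul_le_of_vadd_mem (hc : 0 ≤ c) (hρ : ∀ x, c * ρ x ≤ ρ ((1 : ℤ) +ᵥ x))
    {S : Set X} {a b : ℝ} (hS : ∀ x ∈ S, a ≤ ρ x ∧ ρ x ≤ b) {x : X} (hx : x ∈ S) {n : ℤ}
    (hnx : n +ᵥ x ∈ S) : c ^ n.natAbs * a ≤ b := by
  have hcn : 0 ≤ c ^ n.natAbs := pow_nonneg hc _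
  obtain ⟨m, rfl | rfl⟩ := Int.eq_nat_or_neg n
  · calc c ^ (m : ℤ).natAbs * a ≤ c ^ m * ρ x := by
          simpa using mul_le_mul_of_nonneg_left (hS x hx).1 hcn
      _ ≤ ρ ((m : ℤ) +ᵥ x) := pow_mul_le_natCast_vadd hc hρ x m
      _ ≤ b := (hS _ hnx).2
  · calc c ^ (-(m : ℤ)).natAbs * a ≤ c ^ m * ρ (-(m : ℤ) +ᵥ x) := by
          simpa using mul_le_mul_of_nonneg_left (hS _ hnx).1 hcn
      _ ≤ ρ x := pow_mul_neg_natCast_vadd_le hc hρ x m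
      _ ≤ b := (hS x hx).2

theorem Int.finite_setOf_pow_natAbs_mul_le (hc : 1 < c) {a : ℝ} (ha : 0 < a) (b : ℝ) :
    {n : ℤ | c ^ n.natAbs * a ≤ b}.Finite := by
  obtain ⟨N, hN⟩ := pow_unbounded_of_one_lt (b / a) hc
  refine (Set.finite_Icc (-(N : ℤ)) N).subset fun n hn => ?_
  have : c ^ n.natAbs < c ^ N := ((le_div_iff₀ ha).2 hn).trans_lt hN
  have := (pow_lt_pow_iff_right₀ hc).1 this
  simp only [Set.mem_Icc]
  omega

theorem exists_vadd_mem_Icc (hc : 1 < c) (hρ0 : ∀ x, 0 < ρ x)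
    (hρ : ∀ x, c * ρ x ≤ ρ ((1 : ℤ) +ᵥ x)) {C : ℝ} (hC : ∀ x, ρ ((1 : ℤ) +ᵥ x) ≤ C * ρ x)
    (x : X) : ∃ n : ℤ, ρ (n +ᵥ x) ∈ Icc 1 C := by
  have hc0 : 0 ≤ c := by linarith
  have hreach : ∃ n : ℤ, 1 ≤ ρ (n +ᵥ x) := by
    obtain ⟨N, hN⟩ := pow_unbounded_of_one_lt (ρ x)⁻¹ hc
    refine ⟨N, le_trans ?_ (pow_mul_le_natCast_vadd hc0 hρ x N)⟩
    exact ((inv_lt_iff_one_lt_mul₀ (hρ0 x)).1 hN).le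
  have hbdd : ∃ b : ℤ, ∀ n : ℤ, 1 ≤ ρ (n +ᵥ x) → b ≤ n := by
    obtain ⟨N, hN⟩ := pow_unbounded_of_one_lt (ρ x) hc
    refine ⟨-N, fun n hn => ?_⟩
    obtain ⟨m, rfl | rfl⟩ := Int.eq_nat_or_neg n
    · omega
    · have : c ^ m < c ^ N := calc
        c ^ m ≤ c ^ m * ρ (-(m : ℤ) +ᵥ x) := le_mul_of_one_le_right (pow_nonneg hc0 m) hn
        _ ≤ ρ x := pow_mul_neg_natCast_vadd_le hc0 hρ x m
        _ < c ^ N := hN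
      have := (pow_lt_pow_iff_right₀ hc).1 this
      omega
  obtain ⟨n, hn, hleast⟩ := Int.exists_least_of_bdd hbdd hreach
  have hprev : ρ ((n - 1) +ᵥ x) < 1 := not_le.1 fun h => by have := hleast _ h; omega
  have hstep : ρ (n +ᵥ x) ≤ C * ρ ((n - 1) +ᵥ x) := by
    simpa [vadd_vadd] using hC ((n - 1) +ᵥ x)
  refine ⟨n, hn, hstep.trans ?_⟩
  nlinarith [hρ0 ((n - 1) +ᵥ x)]

variable [TopologicalSpace X]

theorem properlyDiscontinuousVAdd_of_expanding (hc : 1 < c) (hρc : Continuous ρ)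
    (hρ0 : ∀ x, 0 < ρ x) (hρ : ∀ x, c * ρ x ≤ ρ ((1 : ℤ) +ᵥ x)) :
    ProperlyDiscontinuousVAdd ℤ X where
  finite_disjoint_inter_image {K L} hK hL := by
    rcases (K ∪ L).eq_empty_or_nonempty with hKL | hKL
    · simp [(union_empty_iff.1 hKL).1]
    obtain ⟨p, -, hp⟩ := (hK.union hL).exists_isMinOn hKL hρc.continuousOn
    obtain ⟨q, -, hq⟩ := (hK.union hL).exists_isMaxOn hKL hρc.continuousOn
    refine (Int.finite_setOf_pow_natAbs_mul_le hc (hρ0 p) (ρ q)).subset ?_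
    rintro n ⟨-, ⟨x, hx, rfl⟩, hnx⟩
    exact pow_natAbs_mul_le_of_vadd_mem (by linarith) hρ (fun y hy => ⟨hp hy, hq hy⟩)
      (Or.inl hx) (Or.inr hnx)

theorem compactSpace_quotient_of_expanding (hc : 1 < c) (hρ0 : ∀ x, 0 < ρ x)
    (hρ : ∀ x, c * ρ x ≤ ρ ((1 : ℤ) +ᵥ x)) {C : ℝ} (hC : ∀ x, ρ ((1 : ℤ) +ᵥ x) ≤ C * ρ x)
    (hshell : IsCompact (ρ ⁻¹' Icc 1 C)) : CompactSpace (Quotient (AddAction.orbitRel ℤ X)) := by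
  refine ⟨?_⟩
  convert hshell.image continuous_quotient_mk'
  refine (eq_univ_of_forall fun q => ?_).symm
  obtain ⟨x, rfl⟩ := Quotient.mk_surjective q
  obtain ⟨n, hn⟩ := exists_vadd_mem_Icc hc hρ0 hρ hC x
  exact ⟨n +ᵥ x, hn, Quotient.sound ⟨n, rfl⟩⟩

end Expanding

section Hopf

variable {𝕜 E F : Type*} [NormedField 𝕜] [NormedAddCommGroup E] [NormedSpace 𝕜 E]
  [NormedAddCommGroup F] [NormedSpace 𝕜 F]

theorem min_mul_norm_le_norm_smul_prod (a b : 𝕜) (z : E × F) :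
    min ‖a‖ ‖b‖ * ‖z‖ ≤ ‖(a • z.1, b • z.2)‖ := by
  rw [Prod.norm_def, Prod.norm_mk, mul_max_of_nonneg _ _ (le_min (norm_nonneg a) (norm_nonneg b)),
    norm_smul, norm_smul]
  gcongr
  exacts [min_le_left _ _, min_le_right _ _]

theorem norm_smul_prod_le_max_mul_norm (a b : 𝕜) (z : E × F) :
    ‖(a • z.1, b • z.2)‖ ≤ max ‖a‖ ‖b‖ * ‖z‖ := by
  rw [Prod.norm_def, Prod.norm_mk, mul_max_of_nonneg _ _ ((norm_nonneg a).trans (le_max_left _ _)),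
    norm_smul, norm_smul]
  gcongr
  exacts [le_max_left _ _, le_max_right _ _]

theorem isCompact_norm_preimage_Icc_punctured [ProperSpace E] {a b : ℝ} (ha : 0 < a) :
    IsCompact {z : {z : E // z ≠ 0} | ‖(z : E)‖ ∈ Icc a b} := by
  have hK : IsCompact {z : E | ‖z‖ ∈ Icc a b} :=
    (isCompact_closedBall 0 b).of_isClosed_subset (isClosed_Icc.preimage continuous_norm)
      fun z hz => mem_closedBall_zero_iff.2 hz.2
  refine (Topology.IsInducing.subtypeVal.isCompact_preimage_iff fun z hz => ?_).2 hK
  exact ⟨⟨z, norm_pos_iff.1 (ha.trans_le hz.1)⟩, rfl⟩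

abbrev hopfAction (α β : 𝕜ˣ) : AddAction ℤ {z : E × F // z ≠ 0} where
  vadd n z := ⟨((α ^ n) • z.1.1, (β ^ n) • z.1.2), by
    simpa [Prod.ext_iff, smul_eq_zero_iff_eq] using z.2⟩
  zero_vadd z := by ext <;> simp [HVAdd.hVAdd]
  add_vadd m n z := by ext <;> simp [HVAdd.hVAdd, zpow_add, mul_smul]

theorem coe_hopfAction_vadd (α β : 𝕜ˣ) (n : ℤ) (z : {z : E × F // z ≠ 0}) :
    letI := hopfAction (E := E) (F := F) α β
    ((n +ᵥ z : {z : E × F // z ≠ 0}) : E × F) = ((α ^ n) • z.1.1, (β ^ n) • z.1.2) :=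
  rfl

theorem min_mul_norm_le_norm_hopfAction_one_vadd (α β : 𝕜ˣ) (z : {z : E × F // z ≠ 0}) :
    letI := hopfAction (E := E) (F := F) α β
    min ‖(α : 𝕜)‖ ‖(β : 𝕜)‖ * ‖(z : E × F)‖ ≤
      ‖(((1 : ℤ) +ᵥ z : {z : E × F // z ≠ 0}) : E × F)‖ := by
  simpa only [coe_hopfAction_vadd, zpow_one, Units.smul_def] using
    min_mul_norm_le_norm_smul_prod (α : 𝕜) β z.1

theorem hopfAction_continuousConstVAdd (α β : 𝕜ˣ) :
    letI := hopfAction (E := E) (F := F) α β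
    ContinuousConstVAdd ℤ {z : E × F // z ≠ 0} :=
  letI := hopfAction (E := E) (F := F) α β
  ⟨fun n => Continuous.subtype_mk (by fun_prop) _⟩

theorem hopfAction_properlyDiscontinuousVAdd {α β : 𝕜ˣ} (hα : 1 < ‖(α : 𝕜)‖)
    (hβ : 1 < ‖(β : 𝕜)‖) :
    letI := hopfAction (E := E) (F := F) α β
    ProperlyDiscontinuousVAdd ℤ {z : E × F // z ≠ 0} :=
  letI := hopfAction (E := E) (F := F) α β
  properlyDiscontinuousVAdd_of_expanding (lt_min hα hβ)
    (continuous_norm.comp continuous_subtype_val) (fun z => norm_pos_iff.2 z.2)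
    (min_mul_norm_le_norm_hopfAction_one_vadd α β)

variable [ProperSpace E] [ProperSpace F]

theorem hopfAction_compactSpace_quotient {α β : 𝕜ˣ} (hα : 1 < ‖(α : 𝕜)‖)
    (hβ : 1 < ‖(β : 𝕜)‖) :
    letI := hopfAction (E := E) (F := F) α β
    CompactSpace (Quotient (AddAction.orbitRel ℤ {z : E × F // z ≠ 0})) :=
  letI := hopfAction (E := E) (F := F) α β
  compactSpace_quotient_of_expanding (lt_min hα hβ) (fun z => norm_pos_iff.2 z.2)
    (min_mul_norm_le_norm_hopfAction_one_vadd α β)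
    (fun z => by
      simpa only [coe_hopfAction_vadd, zpow_one, Units.smul_def] using
        norm_smul_prod_le_max_mul_norm (α : 𝕜) β z.1)
    (isCompact_norm_preimage_Icc_punctured one_pos)

theorem hopfAction_t2Space_quotient {α β : 𝕜ˣ} (hα : 1 < ‖(α : 𝕜)‖) (hβ : 1 < ‖(β : 𝕜)‖) :
    letI := hopfAction (E := E) (F := F) α β
    T2Space (Quotient (AddAction.orbitRel ℤ {z : E × F // z ≠ 0})) :=
  letI := hopfAction (E := E) (F := F) α β
  haveI := hopfAction_continuousConstVAdd (E := E) (F := F) α β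
  haveI := hopfAction_properlyDiscontinuousVAdd (E := E) (F := F) hα hβ
  haveI : LocallyCompactSpace {z : E × F // z ≠ 0} := isOpen_ne.locallyCompactSpace
  t2Space_of_properlyDiscontinuousVAdd_of_t2Space

end Hopf

theorem hopfSetoid_eq_orbitRel (α β : ℂˣ) (hα : 1 < ‖(α : ℂ)‖) (hβ : 1 < ‖(β : ℂ)‖) :
    hopfSetoid α β hα hβ =
      letI := hopfAction (E := ℂ) (F := ℂ) α β
      AddAction.orbitRel ℤ {z : ℂ × ℂ // z ≠ 0} := by
  let := hopfAction (E := ℂ) (F := ℂ) α β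
  ext x y
  rw [AddAction.orbitRel_apply, AddAction.mem_orbit_symm]
  simp only [AddAction.mem_orbit_iff, Subtype.ext_iff, coe_hopfAction_vadd, Prod.ext_iff,
    Units.smul_def, Units.val_zpow_eq_zpow_val, smul_eq_mul]
  rfl

/-- The orbit space of the Hopf-surface action, with the quotient topology, is a
compact Hausdorff space. -/
theorem stmt8 (α β : ℂ) (hα : 1 < ‖α‖) (hβ : 1 < ‖β‖) :
    CompactSpace (Quotient (hopfSetoid α β hα hβ)) ∧
    T2Space (Quotient (hopfSetoid α β hα hβ)) := by
  lift α to ℂˣ using isUnit_iff_ne_zero.2 (norm_pos_iff.1 (one_pos.trans hα))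
  lift β to ℂˣ using isUnit_iff_ne_zero.2 (norm_pos_iff.1 (one_pos.trans hβ))
  rw [hopfSetoid_eq_orbitRel α β hα hβ]
  exact ⟨hopfAction_compactSpace_quotient hα hβ, hopfAction_t2Space_quotient hα hβ⟩
end
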